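/- arXiv:1811.03770 — 6 statements merged into one kernel-verified Lean document; each statement's English description precedes it below -/
import Mathlib

section
/- Let p be a prime, r an integer, s ≥ 1 an integer, and n, n' positive integers with n ≡ n' mod p^s. Set T(n) := Σ_{1 ≤ k < n, p ∤ k} k^{−(r+1)} ∈ ℤ_p. Then T(n) ≡ T(n') mod p^{s−1} ℤ_p in all cases; moreover T(n) ≡ T(n') mod p^s ℤ_p if either p ≥ 3 and (p−1) ∤ (r+1), or p = 2, s ≥ 2 and 2 ∤ (r+1). (In particular n ↦ T(n) extends to a continuous function ψ̃_p^{(r)} : ℤ_p → ℤ_p.) -/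
/-!
With `t = -(r + 1)`, the summand `k ↦ k ^ t` (`p ∤ k`, else `0`) has period `p ^ s` modulo `p ^ s`,
so `T (n + m p ^ s) - T n ≡ m U_s (mod p ^ s)`, where `U_s` is the sum of `u ^ t` over the units
`u < p ^ s`. Cutting `U_{s+1}` into `p` blocks gives `U_{s+1} ≡ p U_s (mod p ^ s)`, hence
`‖U_s‖ ≤ p ^ (1 - s)`. If `(p - 1) ∤ t`, some unit `c` has `c ^ t ≢ 1 (mod p)`, and since
multiplication by `c` permutes the units, `c ^ t U_s ≡ U_s` forces `U_s ≡ 0 (mod p ^ s)`. For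
`p = 2` and odd `t`, pairing `u` with `2 ^ s - u` gives `u ^ t + (2 ^ s - u) ^ t ≡ 0 (mod 2 ^ s)`.
-/

open Finset

/-- `T(n) = Σ_{1 ≤ k < n, p ∤ k} k^{-(r+1)}`, computed in `ℚ_p`. -/
noncomputable def partialPolygammaSum (p : ℕ) [Fact p.Prime] (r : ℤ) (n : ℕ) : ℚ_[p] :=
  ∑ k ∈ (Finset.Ico 1 n).filter (fun k => ¬ p ∣ k), ((k : ℚ_[p])) ^ (-(r + 1))

namespace Finset

lemma sum_range_mul_mod {M : Type*} [AddCommMonoid M] (f : ℕ → M) {c N : ℕ}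
    (hc : c.Coprime N) : ∑ k ∈ range N, f (c * k % N) = ∑ k ∈ range N, f k := by
  have hmaps : Set.MapsTo (fun k => c * k % N) (range N) (range N) := fun k hk =>
    mem_range.mpr (Nat.mod_lt _ (pos_of_ne_zero (by rintro rfl; simp at hk)))
  have hinj : Set.InjOn (fun k => c * k % N) (range N) := fun a ha b hb hab =>
    Nat.ModEq.eq_of_lt_of_lt (Nat.ModEq.cancel_left_of_coprime hc.symm hab)
      (mem_range.mp ha) (mem_range.mp hb)
  exact sum_nbij _ hmaps hinj (surjOn_of_injOn_of_card_le _ hmaps hinj le_rfl) fun _ _ => rfl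

lemma sum_range_two_mul_eq_sum_add_reflect {M : Type*} [AddCommMonoid M] (f : ℕ → M) (N : ℕ)
    (hN : f N = 0) (h2N : f (2 * N) = 0) :
    ∑ k ∈ range (2 * N), f k = ∑ k ∈ range N, (f k + f (2 * N - k)) := by
  rw [two_mul] at h2N ⊢
  rw [sum_range_add, sum_add_distrib]
  congr 1
  have hshift := (sum_range_succ (fun k => f (N + k)) N).symm.trans
    (sum_range_succ' (fun k => f (N + k)) N)
  rw [add_zero, hN, h2N, add_zero, add_zero] at hshift
  rw [hshift, ← sum_range_reflect]
  exact sum_congr rfl fun k hk => congrArg f (by have := mem_range.mp hk; omega)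

end Finset

section NormedField

variable {K : Type*} [NormedField K]

lemma norm_pow_sub_pow_le [IsUltrametricDist K] {x y : K} (hx : ‖x‖ ≤ 1) (hy : ‖y‖ ≤ 1) (n : ℕ) :
    ‖x ^ n - y ^ n‖ ≤ ‖x - y‖ := by
  rw [← (Commute.all x y).geom_sum₂_mul, norm_mul]
  refine mul_le_of_le_one_left (norm_nonneg _) ?_
  refine IsUltrametricDist.norm_sum_le_of_forall_le_of_nonneg zero_le_one fun i _ => ?_
  rw [norm_mul, norm_pow, norm_pow]
  exact mul_le_one₀ (pow_le_one₀ (norm_nonneg _) hx) (by positivity)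
    (pow_le_one₀ (norm_nonneg _) hy)

lemma norm_zpow_sub_zpow_le [IsUltrametricDist K] {x y : K} (hx : ‖x‖ = 1) (hy : ‖y‖ = 1) (t : ℤ) :
    ‖x ^ t - y ^ t‖ ≤ ‖x - y‖ := by
  have hx0 : x ≠ 0 := norm_ne_zero_iff.mp (by simp [hx])
  have hy0 : y ≠ 0 := norm_ne_zero_iff.mp (by simp [hy])
  obtain ⟨n, rfl | rfl⟩ := Int.eq_nat_or_neg t
  · simpa using norm_pow_sub_pow_le hx.le hy.le n
  · have hinv : x ^ (-n : ℤ) - y ^ (-n : ℤ) = (y ^ n - x ^ n) * (x ^ n)⁻¹ * (y ^ n)⁻¹ := by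
      rw [zpow_neg, zpow_neg, zpow_natCast, zpow_natCast]
      field_simp
    rw [hinv, norm_mul, norm_mul, norm_inv, norm_inv, norm_pow, norm_pow, hx, hy, norm_sub_rev x]
    simpa using norm_pow_sub_pow_le hy.le hx.le n

lemma norm_zpow_sub_one_eq_norm_pow_natAbs_sub_one {x : K} (hx : ‖x‖ = 1) (t : ℤ) :
    ‖x ^ t - 1‖ = ‖x ^ t.natAbs - 1‖ := by
  have hx0 : x ≠ 0 := norm_ne_zero_iff.mp (by simp [hx])
  rcases Int.natAbs_eq t with ht | ht
  · rw [ht, zpow_natCast, Int.natAbs_natCast]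
  · rw [ht, Int.natAbs_neg, Int.natAbs_natCast, zpow_neg, zpow_natCast]
    have hinv : (x ^ t.natAbs)⁻¹ - 1 = -(x ^ t.natAbs - 1) * (x ^ t.natAbs)⁻¹ := by
      field_simp
      ring
    rw [hinv, norm_mul, norm_neg, norm_inv, norm_pow, hx, one_pow, inv_one, mul_one]

end NormedField

section Padic

variable {p : ℕ} [Fact p.Prime]

lemma Padic.norm_natCast_eq_one_of_not_dvd {k : ℕ} (hk : ¬ p ∣ k) : ‖(k : ℚ_[p])‖ = 1 :=
  Padic.norm_natCast_eq_one_iff.mpr ((Nat.Prime.coprime_iff_not_dvd Fact.out).mpr hk)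

lemma Padic.norm_natCast_sub_natCast_le_of_modEq {s k k' : ℕ} (h : k ≡ k' [MOD p ^ s]) :
    ‖(k : ℚ_[p]) - k'‖ ≤ (p : ℝ) ^ (-s : ℤ) := by
  have hdvd : ((p ^ s : ℕ) : ℤ) ∣ (k : ℤ) - k' := Nat.modEq_iff_dvd.mp h.symm
  exact_mod_cast (Padic.norm_int_le_pow_iff_dvd (p := p) ((k : ℤ) - k') s).mpr
    (by exact_mod_cast hdvd)

noncomputable def primeToZPow (p : ℕ) [Fact p.Prime] (t : ℤ) (k : ℕ) : ℚ_[p] :=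
  if p ∣ k then 0 else (k : ℚ_[p]) ^ t

noncomputable def unitPowerSum (p : ℕ) [Fact p.Prime] (t : ℤ) (s : ℕ) : ℚ_[p] :=
  ∑ k ∈ range (p ^ s), primeToZPow p t k

namespace primeToZPow

variable (t : ℤ)

@[simp]
lemma zero : primeToZPow p t 0 = 0 := by
  simp [primeToZPow]

lemma mul (a b : ℕ) : primeToZPow p t (a * b) = primeToZPow p t a * primeToZPow p t b := by
  by_cases ha : p ∣ a
  · simp [primeToZPow, ha, Dvd.dvd.mul_right ha]
  by_cases hb : p ∣ b
  · simp [primeToZPow, hb, Dvd.dvd.mul_left hb]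
  have hab : ¬ p ∣ a * b := (Nat.Prime.not_dvd_mul Fact.out ha hb)
  simp only [primeToZPow, if_neg ha, if_neg hb, if_neg hab, Nat.cast_mul, mul_zpow]

lemma norm_le_one (k : ℕ) : ‖primeToZPow p t k‖ ≤ 1 := by
  unfold primeToZPow
  split_ifs with hk
  · simp
  · rw [norm_zpow, Padic.norm_natCast_eq_one_of_not_dvd hk, one_zpow]

lemma norm_sub_le_of_modEq {s k k' : ℕ} (h : k ≡ k' [MOD p ^ s]) :
    ‖primeToZPow p t k - primeToZPow p t k'‖ ≤ (p : ℝ) ^ (-s : ℤ) := by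
  rcases Nat.eq_zero_or_pos s with rfl | hs
  · rw [Nat.cast_zero, neg_zero, zpow_zero, sub_eq_add_neg]
    refine (IsUltrametricDist.norm_add_le_max _ _).trans (max_le (norm_le_one t k) ?_)
    exact (norm_neg _).trans_le (norm_le_one t k')
  have hdvd : p ∣ k ↔ p ∣ k' := h.dvd_iff (dvd_pow_self p hs.ne')
  by_cases hk : p ∣ k
  · simp [primeToZPow, hk, hdvd.mp hk]
  rw [primeToZPow, primeToZPow, if_neg hk, if_neg (hdvd.not.mp hk)]
  refine (norm_zpow_sub_zpow_le (Padic.norm_natCast_eq_one_of_not_dvd hk)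
    (Padic.norm_natCast_eq_one_of_not_dvd (hdvd.not.mp hk)) t).trans ?_
  exact Padic.norm_natCast_sub_natCast_le_of_modEq h

lemma norm_add_sub_le (ht : Odd t) {s k : ℕ} (hs : 0 < s) (hk : k ≤ p ^ s) :
    ‖primeToZPow p t k + primeToZPow p t (p ^ s - k)‖ ≤ (p : ℝ) ^ (-s : ℤ) := by
  have hdvd : p ∣ p ^ s - k ↔ p ∣ k := Nat.dvd_sub_iff_right hk (dvd_pow_self p hs.ne')
  by_cases hpk : p ∣ k
  · simp [primeToZPow, hpk, hdvd.mpr hpk]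
  rw [primeToZPow, primeToZPow, if_neg hpk, if_neg (hdvd.not.mpr hpk), add_comm,
    ← sub_neg_eq_add, ← ht.neg_zpow]
  refine (norm_zpow_sub_zpow_le (Padic.norm_natCast_eq_one_of_not_dvd (hdvd.not.mpr hpk))
    ((norm_neg _).trans (Padic.norm_natCast_eq_one_of_not_dvd hpk)) t).trans_eq ?_
  rw [Nat.cast_sub hk, sub_neg_eq_add, sub_add_cancel, Nat.cast_pow, Padic.norm_p_pow]

end primeToZPow

lemma partialPolygammaSum_eq_sum_range (r : ℤ) (n : ℕ) :
    partialPolygammaSum p r n = ∑ k ∈ range n, primeToZPow p (-(r + 1)) k := by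
  rw [partialPolygammaSum, sum_filter]
  rcases n with _ | n
  · simp
  rw [sum_range_succ', sum_Ico_eq_sum_range, primeToZPow.zero, add_zero]
  exact sum_congr rfl fun k _ => by simp [primeToZPow, add_comm 1 k, ite_not]

lemma norm_sum_primeToZPow_add_sub_unitPowerSum_le (t : ℤ) (s a : ℕ) :
    ‖∑ k ∈ range (p ^ s), primeToZPow p t (a + k) - unitPowerSum p t s‖ ≤ (p : ℝ) ^ (-s : ℤ) := by
  induction a with
  | zero => simp [unitPowerSum]
  | succ a ih =>
    have hshift : ∑ k ∈ range (p ^ s), primeToZPow p t (a + 1 + k) =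
        ∑ k ∈ range (p ^ s), primeToZPow p t (a + k) +
          (primeToZPow p t (a + p ^ s) - primeToZPow p t a) := by
      have h := (sum_range_succ (fun k => primeToZPow p t (a + k)) (p ^ s)).symm.trans
        (sum_range_succ' (fun k => primeToZPow p t (a + k)) (p ^ s))
      simp only [add_zero, ← add_assoc, add_right_comm a _ 1] at h
      linear_combination -h
    rw [hshift, add_sub_right_comm]
    refine (IsUltrametricDist.norm_add_le_max _ _).trans (max_le ih ?_)
    exact primeToZPow.norm_sub_le_of_modEq t (Nat.add_modEq_right)

lemma norm_sum_primeToZPow_add_sub_mul_unitPowerSum_le (t : ℤ) (s a m : ℕ) :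
    ‖∑ k ∈ range (m * p ^ s), primeToZPow p t (a + k) - m * unitPowerSum p t s‖ ≤
      (p : ℝ) ^ (-s : ℤ) := by
  induction m with
  | zero => simp
  | succ m ih =>
    have hblock := norm_sum_primeToZPow_add_sub_unitPowerSum_le (p := p) t s (a + m * p ^ s)
    rw [add_mul, one_mul, sum_range_add]
    calc _ = ‖(∑ k ∈ range (m * p ^ s), primeToZPow p t (a + k) - m * unitPowerSum p t s) +
          (∑ k ∈ range (p ^ s), primeToZPow p t (a + m * p ^ s + k) - unitPowerSum p t s)‖ := by
          simp only [← add_assoc]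
          push_cast
          ring_nf
      _ ≤ _ := (IsUltrametricDist.norm_add_le_max _ _).trans (max_le ih hblock)

lemma norm_unitPowerSum_succ_sub_le (t : ℤ) (s : ℕ) :
    ‖unitPowerSum p t (s + 1) - p * unitPowerSum p t s‖ ≤ (p : ℝ) ^ (-s : ℤ) := by
  simpa [unitPowerSum, pow_succ'] using norm_sum_primeToZPow_add_sub_mul_unitPowerSum_le t s 0 p

lemma norm_unitPowerSum_le (t : ℤ) (s : ℕ) :
    ‖unitPowerSum p t s‖ ≤ (p : ℝ) ^ (1 - s : ℤ) := by
  induction s with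
  | zero => simp [unitPowerSum]
  | succ s ih =>
    have hp : (0 : ℝ) < p := by exact_mod_cast (Fact.out : p.Prime).pos
    have hscaled : ‖(p : ℚ_[p]) * unitPowerSum p t s‖ ≤ (p : ℝ) ^ (-s : ℤ) := by
      rw [norm_mul, Padic.norm_p, ← zpow_neg_one, ← le_div_iff₀' (by positivity),
        ← zpow_sub₀ hp.ne']
      rwa [show (-s : ℤ) - -1 = 1 - s by ring]
    calc ‖unitPowerSum p t (s + 1)‖ =
          ‖(unitPowerSum p t (s + 1) - p * unitPowerSum p t s) + p * unitPowerSum p t s‖ := by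
          rw [sub_add_cancel]
      _ ≤ (p : ℝ) ^ (-s : ℤ) := (IsUltrametricDist.norm_add_le_max _ _).trans
          (max_le (norm_unitPowerSum_succ_sub_le t s) hscaled)
      _ = (p : ℝ) ^ (1 - (s + 1 : ℕ) : ℤ) := by push_cast; ring_nf

lemma norm_partialPolygammaSum_sub_le {r : ℤ} {s n n' : ℕ} (h : n ≡ n' [MOD p ^ s]) :
    ‖partialPolygammaSum p r n - partialPolygammaSum p r n'‖ ≤
      max ((p : ℝ) ^ (-s : ℤ)) ‖unitPowerSum p (-(r + 1)) s‖ := by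
  wlog hle : n ≤ n' generalizing n n'
  · rw [norm_sub_rev]
    exact this h.symm (by omega)
  obtain ⟨m, hm⟩ := (Nat.modEq_iff_dvd' hle).mp h
  obtain rfl : n' = n + m * p ^ s := by rw [mul_comm, ← hm]; omega
  set U := unitPowerSum p (-(r + 1)) s
  rw [norm_sub_rev, partialPolygammaSum_eq_sum_range, partialPolygammaSum_eq_sum_range,
    sum_range_add, add_sub_cancel_left]
  have hmU : ‖(m : ℚ_[p]) * U‖ ≤ ‖U‖ := by
    rw [norm_mul]
    exact mul_le_of_le_one_left (norm_nonneg _) (IsUltrametricDist.norm_natCast_le_one _ m)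
  calc _ = ‖(∑ k ∈ range (m * p ^ s), primeToZPow p (-(r + 1)) (n + k) - m * U) + m * U‖ := by
        rw [sub_add_cancel]
    _ ≤ _ := (IsUltrametricDist.norm_add_le_max _ _).trans
        (max_le_max (norm_sum_primeToZPow_add_sub_mul_unitPowerSum_le _ s n m) hmU)

lemma norm_unitPowerSum_le_of_norm_sub_one_eq_one {t : ℤ} {c : ℕ} (hc : ¬ p ∣ c)
    (hct : ‖primeToZPow p t c - 1‖ = 1) (s : ℕ) :
    ‖unitPowerSum p t s‖ ≤ (p : ℝ) ^ (-s : ℤ) := by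
  have hcop : c.Coprime (p ^ s) :=
    (((Nat.Prime.coprime_iff_not_dvd Fact.out).mpr hc).pow_left s).symm
  have hperm := sum_range_mul_mod (primeToZPow p t) hcop
  have hmul : ∑ k ∈ range (p ^ s), primeToZPow p t (c * k) =
      primeToZPow p t c * unitPowerSum p t s := by
    simp only [primeToZPow.mul, ← mul_sum, unitPowerSum]
  calc ‖unitPowerSum p t s‖ = ‖(1 - primeToZPow p t c) * unitPowerSum p t s‖ := by
        rw [norm_mul, norm_sub_rev, hct, one_mul]
    _ = ‖∑ k ∈ range (p ^ s),
          (primeToZPow p t (c * k % p ^ s) - primeToZPow p t (c * k))‖ := by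
        rw [sum_sub_distrib, hperm, hmul, unitPowerSum]
        ring_nf
    _ ≤ _ := IsUltrametricDist.norm_sum_le_of_forall_le_of_nonneg (by positivity) fun k _ =>
        primeToZPow.norm_sub_le_of_modEq t (Nat.mod_modEq _ _)

lemma exists_norm_primeToZPow_sub_one_eq_one {t : ℤ} (ht : ¬ ((p : ℤ) - 1 ∣ t)) :
    ∃ c : ℕ, ¬ p ∣ c ∧ ‖primeToZPow p t c - 1‖ = 1 := by
  have hm : ¬ Fintype.card (ZMod p) - 1 ∣ t.natAbs := by
    rw [ZMod.card, ← Int.natCast_dvd_natCast, Int.dvd_natAbs,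
      Nat.cast_sub (Fact.out : p.Prime).one_le, Nat.cast_one]
    exact ht
  obtain ⟨x, hx⟩ := not_forall.mp (mt (FiniteField.forall_pow_eq_one_iff _ _).mp hm)
  have hcx : ((x : ZMod p).val : ZMod p) = x := ZMod.natCast_zmod_val _
  have hc : ¬ p ∣ (x : ZMod p).val := by
    rw [← ZMod.natCast_eq_zero_iff, hcx]
    exact x.ne_zero
  refine ⟨(x : ZMod p).val, hc, ?_⟩
  rw [primeToZPow, if_neg hc,
    norm_zpow_sub_one_eq_norm_pow_natAbs_sub_one (Padic.norm_natCast_eq_one_of_not_dvd hc)]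
  have hint : ((x : ZMod p).val : ℚ_[p]) ^ t.natAbs - 1 =
      (((x : ZMod p).val ^ t.natAbs - 1 : ℤ) : ℚ_[p]) := by push_cast; ring
  rw [hint]
  refine le_antisymm (Padic.norm_int_le_one _) (not_lt.mp fun hlt => hx ?_)
  rw [Padic.norm_intCast_lt_one_iff, ← ZMod.intCast_zmod_eq_zero_iff_dvd] at hlt
  push_cast at hlt
  rw [hcx, sub_eq_zero] at hlt
  exact Units.ext (by simpa using hlt)

lemma norm_unitPowerSum_two_le {t : ℤ} (ht : Odd t) {s : ℕ} (hs : 2 ≤ s) :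
    ‖unitPowerSum 2 t s‖ ≤ (2 : ℝ) ^ (-s : ℤ) := by
  obtain ⟨N, rfl⟩ := Nat.exists_eq_add_of_le' hs
  have hvanish : ∀ k, 2 ∣ k → primeToZPow 2 t k = 0 := fun k hk => if_pos hk
  rw [unitPowerSum, pow_succ', sum_range_two_mul_eq_sum_add_reflect _ _
    (hvanish _ (dvd_pow_self 2 N.succ_ne_zero)) (hvanish _ (dvd_mul_right 2 _)), ← pow_succ']
  refine IsUltrametricDist.norm_sum_le_of_forall_le_of_nonneg (by positivity) fun k hk => ?_
  have hk : k ≤ 2 ^ (N + 2) := (mem_range.mp hk).le.trans (Nat.pow_le_pow_right two_pos (by omega))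
  simpa using primeToZPow.norm_add_sub_le t ht (by omega : 0 < N + 2) hk

end Padic

theorem polygamma_partial_sum_congruence_general
    (p : ℕ) [Fact p.Prime] (r : ℤ) (s : ℕ)
    (n n' : ℕ)
    (hcong : n % p ^ s = n' % p ^ s) :
    ‖partialPolygammaSum p r n - partialPolygammaSum p r n'‖ ≤ (p : ℝ) ^ (1 - (s : ℤ)) ∧
    (((3 ≤ p ∧ ¬ ((p : ℤ) - 1 ∣ (r + 1))) ∨ (p = 2 ∧ 2 ≤ s ∧ ¬ ((2 : ℤ) ∣ (r + 1)))) →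
      ‖partialPolygammaSum p r n - partialPolygammaSum p r n'‖ ≤ (p : ℝ) ^ (-(s : ℤ))) := by
  have hp : (1 : ℝ) ≤ p := by exact_mod_cast (Fact.out : p.Prime).one_le
  have hreduce := norm_partialPolygammaSum_sub_le (r := r) hcong
  refine ⟨hreduce.trans (max_le (zpow_le_zpow_right₀ hp (by omega)) (norm_unitPowerSum_le _ s)), ?_⟩
  rintro (⟨-, hdvd⟩ | ⟨rfl, hs, hodd⟩)
  · obtain ⟨c, hc, hct⟩ := exists_norm_primeToZPow_sub_one_eq_one (p := p) (t := -(r + 1))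
      (by rwa [dvd_neg])
    exact hreduce.trans (max_le le_rfl (norm_unitPowerSum_le_of_norm_sub_one_eq_one hc hct s))
  · have ht : Odd (-(r + 1)) := by rwa [odd_neg, ← Int.not_even_iff_odd, even_iff_two_dvd]
    exact hreduce.trans (max_le le_rfl (by exact_mod_cast norm_unitPowerSum_two_le ht hs))

theorem polygamma_partial_sum_congruence
    (p : ℕ) [Fact p.Prime] (r : ℤ) (s : ℕ) (hs : 1 ≤ s)
    (n n' : ℕ) (hn : 0 < n) (hn' : 0 < n')
    (hcong : n % p ^ s = n' % p ^ s) :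
    ‖partialPolygammaSum p r n - partialPolygammaSum p r n'‖ ≤ (p : ℝ) ^ (1 - (s : ℤ)) ∧
    (((3 ≤ p ∧ ¬ ((p : ℤ) - 1 ∣ (r + 1))) ∨ (p = 2 ∧ 2 ≤ s ∧ ¬ ((2 : ℤ) ∣ (r + 1)))) →
      ‖partialPolygammaSum p r n - partialPolygammaSum p r n'‖ ≤ (p : ℝ) ^ (-(s : ℤ))) :=
  polygamma_partial_sum_congruence_general p r s n n' hcong
end

section
/- Let p be a prime and r an integer. Then: (1) ψ̃_p^{(r)}(0) = ψ̃_p^{(r)}(1) = 0; (2) for every z ∈ ℤ_p, ψ̃_p^{(r)}(z) = (−1)^r · ψ̃_p^{(r)}(1 − z); (3) for every z ∈ ℤ_p, ψ̃_p^{(r)}(z+1) − ψ̃_p^{(r)}(z) = z^{−(r+1)} if z ∈ ℤ_p^×, and ψ̃_p^{(r)}(z+1) − ψ̃_p^{(r)}(z) = 0 if z ∈ pℤ_p. -/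
/-!
Writing `f z` for `ψ z` viewed in `ℚ_[p]`, the defining sums give `f (n + 1) - f n = δ n` on the
naturals, where `δ = unitsZPowIndicator p (-(r + 1))` is `z ^ (-(r + 1))` on the unit sphere
`‖z‖ = 1` and `0` on `pℤ_[p]`.
Since the unit sphere is clopen, `δ` is continuous, so by density of `ℕ` in `ℤ_[p]` the difference
equation holds everywhere; this is (3). For (2), `z ↦ (-1) ^ r * f (1 - z)` satisfies the same
difference equation (because `δ (-z) = (-1) ^ (r + 1) * δ z`) and the same initial value `0`, and a
continuous function on `ℤ_[p]` is determined by its initial value and its differences.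
-/

open Finset Metric

theorem Finset.sum_filter_not_dvd_Ico_one_succ {M : Type*} [AddCommMonoid M] (p m : ℕ)
    (F : ℕ → M) :
    ∑ k ∈ (Ico 1 (m + 1)).filter (fun k => ¬ p ∣ k), F k =
      ∑ k ∈ (Ico 1 m).filter (fun k => ¬ p ∣ k), F k + if p ∣ m then 0 else F m := by
  rcases Nat.eq_zero_or_pos m with rfl | hm
  · simp
  · rw [sum_filter, sum_filter, sum_Ico_succ_top hm]
    by_cases h : p ∣ m <;> simp [h]

namespace PadicInt

variable {p : ℕ} [Fact p.Prime]

theorem eq_of_map_zero_eq_of_sub_eq {G : Type*} [AddCommGroup G] [TopologicalSpace G]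
    [T2Space G] {f g : ℤ_[p] → G} (hf : Continuous f) (hg : Continuous g) (h0 : f 0 = g 0)
    (hsub : ∀ n : ℕ, f (n + 1) - f n = g (n + 1) - g n) : f = g := by
  refine denseRange_natCast.equalizer hf hg (funext fun n => ?_)
  induction n with
  | zero => simpa using h0
  | succ n ih =>
    simp only [Function.comp_apply, Nat.cast_succ] at ih ⊢
    rw [← sub_add_cancel (f _) (f n), ← sub_add_cancel (g _) (g n), hsub, ih]

variable (p) in
noncomputable def unitsZPowIndicator (s : ℤ) : ℤ_[p] → ℚ_[p] :=
  (sphere (0 : ℤ_[p]) 1).indicator fun z => (z : ℚ_[p]) ^ s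

theorem unitsZPowIndicator_of_norm_eq_one {s : ℤ} {z : ℤ_[p]} (hz : ‖z‖ = 1) :
    unitsZPowIndicator p s z = (z : ℚ_[p]) ^ s :=
  Set.indicator_of_mem (mem_sphere_zero_iff_norm.mpr hz) _

theorem unitsZPowIndicator_of_norm_lt_one {s : ℤ} {z : ℤ_[p]} (hz : ‖z‖ < 1) :
    unitsZPowIndicator p s z = 0 :=
  Set.indicator_of_notMem (by simpa using hz.ne) _

theorem unitsZPowIndicator_natCast (s : ℤ) (n : ℕ) :
    unitsZPowIndicator p s n = if p ∣ n then 0 else (n : ℚ_[p]) ^ s := by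
  split_ifs with h
  · exact unitsZPowIndicator_of_norm_lt_one (norm_natCast_lt_one_iff.mpr h)
  · rw [unitsZPowIndicator_of_norm_eq_one (norm_natCast_eq_one_iff.mpr
      ((Nat.Prime.coprime_iff_not_dvd Fact.out).mpr h)), coe_natCast]

theorem unitsZPowIndicator_neg (s : ℤ) (z : ℤ_[p]) :
    unitsZPowIndicator p s (-z) = (-1) ^ s * unitsZPowIndicator p s z := by
  rcases (norm_le_one z).eq_or_lt with hz | hz
  · rw [unitsZPowIndicator_of_norm_eq_one (by rwa [norm_neg]),
      unitsZPowIndicator_of_norm_eq_one hz, coe_neg, neg_eq_neg_one_mul, mul_zpow]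
  · rw [unitsZPowIndicator_of_norm_lt_one (by rwa [norm_neg]),
      unitsZPowIndicator_of_norm_lt_one hz, mul_zero]

theorem continuous_unitsZPowIndicator (s : ℤ) : Continuous (unitsZPowIndicator p s) := by
  have hclopen : IsClopen (sphere (0 : ℤ_[p]) 1) := IsUltrametricDist.isClopen_sphere _ one_ne_zero
  refine continuous_indicator (by simp [hclopen.frontier_eq]) ?_
  rw [hclopen.isClosed.closure_eq]
  refine continuous_subtype_val.continuousOn.zpow₀ s fun z hz => Or.inl ?_
  rw [← norm_ne_zero_iff, ← norm_def (z := z), mem_sphere_zero_iff_norm.mp hz]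
  exact one_ne_zero

theorem add_one_sub_eq_unitsZPowIndicator {f : ℤ_[p] → ℚ_[p]} (hf : Continuous f) {s : ℤ}
    (hfn : ∀ m : ℕ, f m = ∑ k ∈ (Ico 1 m).filter (fun k => ¬ p ∣ k), (k : ℚ_[p]) ^ s)
    (z : ℤ_[p]) : f (z + 1) - f z = unitsZPowIndicator p s z := by
  refine congrFun (denseRange_natCast.equalizer ((hf.comp (continuous_add_const 1)).sub hf)
    (continuous_unitsZPowIndicator s) (funext fun n => ?_)) z
  simp only [Function.comp_apply, Pi.sub_apply]
  rw [← Nat.cast_succ, hfn, hfn, sum_filter_not_dvd_Ico_one_succ, unitsZPowIndicator_natCast,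
    add_sub_cancel_left]

theorem eq_neg_one_zpow_mul_one_sub {f : ℤ_[p] → ℚ_[p]} (hf : Continuous f) {r : ℤ}
    (h0 : f 0 = 0) (h1 : f 1 = 0)
    (hsub : ∀ z, f (z + 1) - f z = unitsZPowIndicator p (-(r + 1)) z) (z : ℤ_[p]) :
    f z = (-1) ^ r * f (1 - z) := by
  refine congrFun (eq_of_map_zero_eq_of_sub_eq hf
    (continuous_const.mul (hf.comp (continuous_sub_left 1))) (by simp [h0, h1]) fun n => ?_) z
  have hsign : (-1 : ℚ_[p]) ^ r * (-1) ^ (-(r + 1)) = -1 := by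
    rw [← zpow_add₀ (by norm_num), show r + -(r + 1) = -1 by ring, zpow_neg_one, inv_neg, inv_one]
  calc f (n + 1) - f n = unitsZPowIndicator p (-(r + 1)) n := hsub n
    _ = -((-1) ^ r * (f (-n + 1) - f (-n))) := by
      rw [hsub, unitsZPowIndicator_neg, ← mul_assoc, hsign, neg_one_mul, neg_neg]
    _ = (-1) ^ r * f (1 - (n + 1)) - (-1) ^ r * f (1 - n) := by ring_nf

end PadicInt

open PadicInt in
theorem polygamma_functional_equations
    (p : ℕ) [Fact p.Prime] (r : ℤ)
    (ψ : ℤ_[p] → ℤ_[p]) (hψcont : Continuous ψ)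
    (hψ : ∀ m : ℕ, ((ψ (m : ℤ_[p]) : ℤ_[p]) : ℚ_[p]) =
      ∑ k ∈ (Finset.Ico 1 m).filter (fun k => ¬ p ∣ k), ((k : ℚ_[p])) ^ (-(r + 1))) :
    (ψ 0 = 0 ∧ ψ 1 = 0) ∧
    (∀ z : ℤ_[p], ((ψ z : ℤ_[p]) : ℚ_[p]) = (-1 : ℚ_[p]) ^ r * ((ψ (1 - z) : ℤ_[p]) : ℚ_[p])) ∧
    (∀ z : ℤ_[p],
      (‖z‖ = 1 → ((ψ (z + 1) : ℤ_[p]) : ℚ_[p]) - ((ψ z : ℤ_[p]) : ℚ_[p])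
        = ((z : ℚ_[p])) ^ (-(r + 1))) ∧
      (‖z‖ < 1 → ψ (z + 1) = ψ z)) := by
  have hf : Continuous fun z => (ψ z : ℚ_[p]) := continuous_subtype_val.comp hψcont
  have hψ0 : ψ 0 = 0 := Subtype.ext (by simpa using hψ 0)
  have hψ1 : ψ 1 = 0 := Subtype.ext (by simpa using hψ 1)
  have hsub := add_one_sub_eq_unitsZPowIndicator hf hψ
  refine ⟨⟨hψ0, hψ1⟩, eq_neg_one_zpow_mul_one_sub hf (by simp [hψ0]) (by simp [hψ1]) hsub,
    fun z => ⟨fun hz => ?_, fun hz => Subtype.ext (sub_eq_zero.mp ?_)⟩⟩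
  · rw [hsub, unitsZPowIndicator_of_norm_eq_one hz]
  · rw [hsub, unitsZPowIndicator_of_norm_lt_one hz]
end

section
/- Let p be a prime, N ≥ 2 an integer with p ∤ N, n an integer with 0 ≤ n < N, and r ∈ ℤ. Let K be a field equipped with a complete nonarchimedean absolute value, together with an isometric embedding ℚ_p → K (so ℤ_p ⊂ K), and let ζ ∈ K be a primitive N-th root of unity. Then for each j = 1, …, N−1 the limit defining ln_{r+1}^{(p)}(ζ^j) exists in K, and ψ̃_p^{(r)}(n/N) = N^r · Σ_{j=1}^{N−1} (1 − ζ^{−jn}) · ln_{r+1}^{(p)}(ζ^j), an equality in K, where n/N ∈ ℤ_p (since p ∤ N) and ψ̃_p^{(r)}(n/N) is viewed in K via ℤ_p ⊂ K. -/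
/-!
Let `g(z) = z^{-(r+1)}` for `z ∈ ℤ_pˣ` and `g(z) = 0` otherwise. Both sides of
`ψ(y + 1) - ψ(y) = g(y)` are continuous and agree on the dense subset `ℕ`, so this holds on `ℤ_p`.
Put `u = 1/N`; then `u(k + N) = uk + 1`, so for `p ∤ k` the term `k^{-(r+1)} = N^{-(r+1)} g(uk)`
is `N^{-(r+1)} (ψ(u(k + N)) - ψ(uk))`. As `ε^N = 1`, the partial sum over `k < p^s` telescopes to
`N^{-(r+1)} (ε^{p^s} B_s - A(ε))`, where `A(ε) = ∑_{b<N} ε^b ψ(ub)` and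
`B_s = ∑_{b<N} ε^b ψ(u(p^s + b)) → A(ε)` because `p^s → 0`. Since `1 - ε^{p^s}` takes finitely many
nonzero values, `ln_{r+1}(ε) = -N^{-(r+1)} A(ε)`. Finally, orthogonality of the characters
`j ↦ ζ^{jb}` gives `∑_j (1 - ζ^{-jn}) A(ζ^j) = N (ψ(0) - ψ(n/N)) = -N ψ(n/N)`.
-/

open Finset Filter

/-- The sequence whose limit (when it exists) is the `p`-adic polylogarithm value
`ln_r^{(p)}(ε)`, for `ε` a root of unity of order prime to `p`. -/
noncomputable def polylogSeq (p : ℕ) [Fact p.Prime] {K : Type*} [NontriviallyNormedField K]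
    (ι : ℚ_[p] →+* K) (r : ℤ) (ε : K) (s : ℕ) : K :=
  (1 - ε ^ (p ^ s))⁻¹ *
    ∑ k ∈ (Finset.range (p ^ s)).filter (fun k => ¬ p ∣ k), ε ^ k * ι ((k : ℚ_[p]) ^ (-r))

open Topology

namespace Finset

theorem sum_range_sub_shift {M : Type*} [AddCommGroup M] (h : ℕ → M) (P N : ℕ) :
    ∑ k ∈ range P, (h (k + N) - h k) = ∑ b ∈ range N, (h (P + b) - h b) := by
  have h₁ := sum_range_add h N P
  rw [add_comm N P, sum_range_add] at h₁
  simp only [sum_sub_distrib, add_comm _ N]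
  linear_combination (norm := abel) (-1 : ℤ) • h₁

theorem sum_range_pow_mul_sub_of_pow_eq_one {R : Type*} [CommRing R] {ε : R} {N : ℕ}
    (hε : ε ^ N = 1) (f : ℕ → R) (P : ℕ) :
    ∑ k ∈ range P, ε ^ k * (f (k + N) - f k) =
      ε ^ P * ∑ b ∈ range N, ε ^ b * f (P + b) - ∑ b ∈ range N, ε ^ b * f b := by
  have := sum_range_sub_shift (fun k => ε ^ k * f k) P N
  simp only [pow_add, hε, mul_one, mul_assoc, ← mul_sub] at this
  rwa [mul_sum, ← sum_sub_distrib]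

theorem filter_not_dvd_Ico_one (p m : ℕ) :
    (Ico 1 m).filter (fun k => ¬ p ∣ k) = (range m).filter (fun k => ¬ p ∣ k) := by
  ext k
  simp only [mem_filter, mem_Ico, mem_range]
  refine ⟨fun ⟨⟨_, hk⟩, hpk⟩ => ⟨hk, hpk⟩, fun ⟨hk, hpk⟩ => ⟨⟨?_, hk⟩, hpk⟩⟩
  exact Nat.pos_of_ne_zero fun hk0 => hpk (hk0 ▸ dvd_zero p)

theorem sum_Icc_one_sub_one_eq_sum_range {M : Type*} [AddCommMonoid M] {f : ℕ → M}
    (h0 : f 0 = 0) (N : ℕ) : ∑ j ∈ Icc 1 (N - 1), f j = ∑ j ∈ range N, f j := by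
  refine sum_subset (fun j hj => ?_) fun j hjN hj => ?_
  · rw [mem_Icc] at hj
    rw [mem_range]
    omega
  · obtain rfl : j = 0 := by
      rw [mem_range] at hjN
      rw [mem_Icc] at hj
      omega
    exact h0

end Finset

namespace IsPrimitiveRoot

variable {K : Type*} [Field K] {ζ : K} {N : ℕ}

theorem sum_zpow_mul_eq_ite (hζ : IsPrimitiveRoot ζ N) (m : ℤ) :
    ∑ j ∈ range N, ζ ^ ((j : ℤ) * m) = if (N : ℤ) ∣ m then (N : K) else 0 := by
  have hpow : ∀ j : ℕ, ζ ^ ((j : ℤ) * m) = (ζ ^ m) ^ j := fun j => by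
    rw [mul_comm, zpow_mul, zpow_natCast]
  simp only [hpow]
  split_ifs with hm
  · simp [(hζ.zpow_eq_one_iff_dvd m).2 hm]
  · have hω : (ζ ^ m) ^ N = 1 := by
      rw [← hpow, zpow_mul, zpow_natCast, hζ.pow_eq_one, one_zpow]
    rw [geom_sum_eq (mt (hζ.zpow_eq_one_iff_dvd m).1 hm), hω, sub_self, zero_div]

theorem sum_one_sub_zpow_mul_sum_pow_mul {n : ℕ} (hζ : IsPrimitiveRoot ζ N) (hn : n < N)
    (F : ℕ → K) :
    ∑ j ∈ range N, (1 - ζ ^ (-(j * n : ℤ))) * ∑ b ∈ range N, (ζ ^ j) ^ b * F b =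
      N * (F 0 - F n) := by
  have hN : 0 < N := by omega
  have hterm : ∀ j b : ℕ, (1 - ζ ^ (-(j * n : ℤ))) * (ζ ^ j) ^ b =
      ζ ^ ((j : ℤ) * b) - ζ ^ ((j : ℤ) * ((b : ℤ) - n)) := fun j b => by
    rw [← pow_mul, ← zpow_natCast, one_sub_mul, ← zpow_add₀ (hζ.ne_zero hN.ne')]
    push_cast
    ring_nf
  have hdvd_zero : ∀ b < N, (N : ℤ) ∣ b ↔ b = 0 := fun b hb => by
    rw [Int.natCast_dvd_natCast]
    exact ⟨fun h => Nat.eq_zero_of_dvd_of_lt h hb, by rintro rfl; exact dvd_zero N⟩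
  have hdvd_sub : ∀ b < N, (N : ℤ) ∣ (b : ℤ) - n ↔ b = n := fun b hb =>
    ⟨fun h => ((Nat.modEq_iff_dvd.2 h).eq_of_lt_of_lt hn hb).symm, by rintro rfl; simp⟩
  calc ∑ j ∈ range N, (1 - ζ ^ (-(j * n : ℤ))) * ∑ b ∈ range N, (ζ ^ j) ^ b * F b
      = ∑ b ∈ range N, (∑ j ∈ range N, ζ ^ ((j : ℤ) * b) -
          ∑ j ∈ range N, ζ ^ ((j : ℤ) * ((b : ℤ) - n))) * F b := by
        simp only [mul_sum, ← sum_sub_distrib, sum_mul, ← hterm, mul_assoc]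
        exact sum_comm
    _ = ∑ b ∈ range N, ((if b = 0 then (N : K) else 0) - (if b = n then (N : K) else 0)) * F b :=
        sum_congr rfl fun b hb => by
          rw [hζ.sum_zpow_mul_eq_ite, hζ.sum_zpow_mul_eq_ite,
            if_congr (hdvd_zero b (mem_range.1 hb)) rfl rfl,
            if_congr (hdvd_sub b (mem_range.1 hb)) rfl rfl]
    _ = N * (F 0 - F n) := by
        simp [sub_mul, ite_mul, sum_sub_distrib, mul_sub, hn, hN]

end IsPrimitiveRoot

theorem tendsto_inv_one_sub_mul_pow_mul_sub {K ι : Type*} [NormedField K] {l : Filter ι}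
    {ε : K} {N : ℕ} (hN : 0 < N) (hε : ε ^ N = 1) {P : ι → ℕ} (hP : ∀ s, ε ^ P s ≠ 1)
    {B : ι → K} {A : K} (hB : Tendsto B l (𝓝 A)) :
    Tendsto (fun s => (1 - ε ^ P s)⁻¹ * (ε ^ P s * B s - A)) l (𝓝 (-A)) := by
  have hsplit : ∀ s, (1 - ε ^ P s)⁻¹ * (ε ^ P s * B s - A) =
      -A + (1 - ε ^ P s)⁻¹ * ε ^ P s * (B s - A) := fun s => by
    have := sub_ne_zero.2 (hP s).symm
    field_simp
    ring
  -- `ε ^ m` only depends on `m % N`, so these factors take finitely many values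
  have hbdd : IsBoundedUnder (· ≤ ·) l (norm ∘ fun s => (1 - ε ^ P s)⁻¹ * ε ^ P s) := by
    refine isBoundedUnder_of ⟨(range N).sup' (nonempty_range_iff.2 hN.ne')
      fun m => ‖(1 - ε ^ m)⁻¹ * ε ^ m‖, fun s => ?_⟩
    simp only [Function.comp_apply, pow_eq_pow_mod (P s) hε]
    exact le_sup' (fun m => ‖(1 - ε ^ m)⁻¹ * ε ^ m‖) (mem_range.2 (Nat.mod_lt _ hN))
  simp only [hsplit]
  simpa using tendsto_const_nhds.add
    (isBoundedUnder_le_mul_tendsto_zero hbdd (tendsto_sub_nhds_zero_iff.2 hB))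

namespace PadicInt

variable {p : ℕ} [Fact p.Prime]

theorem tendsto_p_pow_atTop_nhds_zero : Tendsto (fun s : ℕ => (p : ℤ_[p]) ^ s) atTop (𝓝 0) :=
  tendsto_pow_atTop_nhds_zero_of_norm_lt_one (by simpa using Padic.norm_p_lt_one (p := p))

noncomputable def zpowOnUnits (e : ℤ) (z : ℤ_[p]) : ℚ_[p] :=
  if ‖z‖ = 1 then (z : ℚ_[p]) ^ e else 0

theorem continuous_zpowOnUnits (e : ℤ) : Continuous (zpowOnUnits (p := p) e) := by
  have hclopen : IsClopen {z : ℤ_[p] | ‖z‖ = 1} := by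
    simpa [Metric.sphere] using IsUltrametricDist.isClopen_sphere (0 : ℤ_[p]) one_ne_zero
  refine continuous_if (by simp [hclopen.frontier_eq]) ?_ continuousOn_const
  rw [hclopen.isClosed.closure_eq]
  refine isOpenEmbedding_coe.continuous.continuousOn.zpow₀ e fun (z : ℤ_[p]) (hz : ‖z‖ = 1) =>
    Or.inl ?_
  rw [← norm_ne_zero_iff, ← norm_def, hz]
  exact one_ne_zero

theorem zpowOnUnits_natCast (e : ℤ) (m : ℕ) :
    zpowOnUnits e (m : ℤ_[p]) = if p ∣ m then 0 else (m : ℚ_[p]) ^ e := by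
  simp [zpowOnUnits, (Fact.out : p.Prime).coprime_iff_not_dvd, ite_not]

theorem zpowOnUnits_mul {a : ℤ_[p]} (ha : ‖a‖ = 1) (e : ℤ) (z : ℤ_[p]) :
    zpowOnUnits e (a * z) = (a : ℚ_[p]) ^ e * zpowOnUnits e z := by
  simp [zpowOnUnits, ha, mul_zpow]

theorem apply_add_one_sub_apply_eq_zpowOnUnits {ψ : ℤ_[p] → ℤ_[p]} {e : ℤ}
    (hψcont : Continuous ψ)
    (hψ : ∀ m : ℕ, ((ψ m : ℤ_[p]) : ℚ_[p]) =
      ∑ k ∈ (Ico 1 m).filter (fun k => ¬ p ∣ k), (k : ℚ_[p]) ^ e) (y : ℤ_[p]) :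
    (ψ (y + 1) : ℚ_[p]) - ψ y = zpowOnUnits e y := by
  have hψ' : ∀ m : ℕ, ((ψ m : ℤ_[p]) : ℚ_[p]) = ∑ k ∈ range m, zpowOnUnits e (k : ℤ_[p]) :=
    fun m => by simp only [hψ, filter_not_dvd_Ico_one, sum_filter, zpowOnUnits_natCast, ite_not]
  have hcoe := isOpenEmbedding_coe (p := p).continuous
  refine congrFun (denseRange_natCast.equalizer (g := fun y => (ψ (y + 1) : ℚ_[p]) - ψ y)
    ((hcoe.comp (hψcont.comp (continuous_add_const 1))).sub (hcoe.comp hψcont))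
    (continuous_zpowOnUnits e) (funext fun m => ?_)) y
  simp only [Function.comp_apply, ← Nat.cast_succ, hψ', sum_range_succ, add_sub_cancel_left]

end PadicInt

section PolylogSeq

variable {p : ℕ} [Fact p.Prime] {K : Type*} [NontriviallyNormedField K] (ι : ℚ_[p] →+* K)
  {ψ : ℤ_[p] → ℤ_[p]} {N : ℕ} {u : ℤ_[p]}

theorem sum_filter_not_dvd_pow_mul_zpow_eq {e : ℤ} (hψcont : Continuous ψ)
    (hψ : ∀ m : ℕ, ((ψ m : ℤ_[p]) : ℚ_[p]) =
      ∑ k ∈ (Ico 1 m).filter (fun k => ¬ p ∣ k), (k : ℚ_[p]) ^ e)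
    (hu : (N : ℤ_[p]) * u = 1) {ε : K} (hε : ε ^ N = 1) (P : ℕ) :
    ∑ k ∈ (range P).filter (fun k => ¬ p ∣ k), ε ^ k * ι ((k : ℚ_[p]) ^ e) =
      ι ((N : ℚ_[p]) ^ e) * (ε ^ P * ∑ b ∈ range N, ε ^ b * ι (ψ (u * (P + b : ℕ))) -
        ∑ b ∈ range N, ε ^ b * ι (ψ (u * b))) := by
  have hN : ‖(N : ℤ_[p])‖ = 1 := PadicInt.isUnit_iff.1 (IsUnit.of_mul_eq_one _ hu)
  -- `u * (k + N) = u * k + 1`, so a shift by `N` is a shift by `1` for `ψ (u * ·)`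
  have hstep : ∀ k : ℕ, ι (if p ∣ k then 0 else (k : ℚ_[p]) ^ e) =
      ι ((N : ℚ_[p]) ^ e) * (ι (ψ (u * (k + N : ℕ))) - ι (ψ (u * k))) := fun k => by
    have hshift : u * ((k + N : ℕ) : ℤ_[p]) = u * k + 1 := by
      push_cast
      linear_combination hu
    rw [← map_sub, ← map_mul, hshift, PadicInt.apply_add_one_sub_apply_eq_zpowOnUnits hψcont hψ,
      ← PadicInt.zpowOnUnits_natCast, ← PadicInt.coe_natCast, ← PadicInt.zpowOnUnits_mul hN,
      ← mul_assoc, hu, one_mul]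
  rw [sum_filter, ← sum_range_pow_mul_sub_of_pow_eq_one hε fun m => ι (ψ (u * m)), mul_sum]
  refine sum_congr rfl fun k _ => ?_
  rw [mul_left_comm, ← hstep]
  split_ifs <;> simp

theorem tendsto_polylogSeq {r : ℤ} (hι : ∀ x : ℚ_[p], ‖ι x‖ = ‖x‖) (hψcont : Continuous ψ)
    (hψ : ∀ m : ℕ, ((ψ m : ℤ_[p]) : ℚ_[p]) =
      ∑ k ∈ (Ico 1 m).filter (fun k => ¬ p ∣ k), (k : ℚ_[p]) ^ (-r))
    (hN : 0 < N) (hu : (N : ℤ_[p]) * u = 1) {ε : K} (hε : ε ^ N = 1)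
    (hεp : ∀ s, ε ^ p ^ s ≠ 1) :
    Tendsto (polylogSeq p ι r ε) atTop
      (𝓝 (-(ι ((N : ℚ_[p]) ^ (-r)) * ∑ b ∈ range N, ε ^ b * ι (ψ (u * b))))) := by
  have hcont : Continuous fun z : ℤ_[p] => ι (ψ (u * z)) :=
    (AddMonoidHomClass.isometry_of_norm ι hι).continuous.comp
      (PadicInt.isOpenEmbedding_coe.continuous.comp (hψcont.comp (continuous_const_mul u)))
  have hB : Tendsto (fun s => ∑ b ∈ range N, ε ^ b * ι (ψ (u * (p ^ s + b : ℕ)))) atTop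
      (𝓝 (∑ b ∈ range N, ε ^ b * ι (ψ (u * b)))) := by
    refine tendsto_finsetSum _ fun b _ => ?_
    have hpow : Tendsto (fun s : ℕ => (p : ℤ_[p]) ^ s + b) atTop (𝓝 b) := by
      simpa using PadicInt.tendsto_p_pow_atTop_nhds_zero.add_const (b : ℤ_[p])
    push_cast
    exact ((hcont.tendsto _).comp hpow).const_mul _
  rw [neg_mul_eq_mul_neg]
  refine ((tendsto_inv_one_sub_mul_pow_mul_sub hN hε hεp hB).const_mul _).congr fun s => ?_
  rw [polylogSeq, sum_filter_not_dvd_pow_mul_zpow_eq ι hψcont hψ hu hε, mul_left_comm]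

end PolylogSeq

theorem polygamma_via_polylog_at_roots_of_unity_general
    (p : ℕ) [Fact p.Prime] (N : ℕ) (hpN : ¬ p ∣ N)
    (n : ℕ) (hn : n < N) (r : ℤ)
    (K : Type*) [NontriviallyNormedField K]
    (ι : ℚ_[p] →+* K) (hι : ∀ x : ℚ_[p], ‖ι x‖ = ‖x‖)
    (ζ : K) (hζ : IsPrimitiveRoot ζ N)
    (ψ : ℤ_[p] → ℤ_[p]) (hψcont : Continuous ψ)
    (hψ : ∀ m : ℕ, ((ψ (m : ℤ_[p]) : ℤ_[p]) : ℚ_[p]) =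
      ∑ k ∈ (Finset.Ico 1 m).filter (fun k => ¬ p ∣ k), ((k : ℚ_[p])) ^ (-(r + 1)))
    (x : ℤ_[p]) (hx : (N : ℤ_[p]) * x = (n : ℤ_[p])) :
    ∃ L : ℕ → K,
      (∀ j ∈ Finset.Icc 1 (N - 1),
        Tendsto (polylogSeq p ι (r + 1) (ζ ^ j)) atTop (nhds (L j))) ∧
      ι ((ψ x : ℤ_[p]) : ℚ_[p]) = ι ((N : ℚ_[p]) ^ r) *
        ∑ j ∈ Finset.Icc 1 (N - 1), (1 - ζ ^ (-(j * n : ℤ))) * L j := by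
  have hN : 0 < N := by omega
  have hcop : p.Coprime N := (Fact.out : p.Prime).coprime_iff_not_dvd.2 hpN
  obtain ⟨u, hu⟩ : ∃ u : ℤ_[p], (N : ℤ_[p]) * u = 1 :=
    (PadicInt.isUnit_iff.2 (PadicInt.norm_natCast_eq_one_iff.2 hcop)).exists_right_inv
  have hxu : x = u * n := by rw [← hx, ← mul_assoc, mul_comm u, hu, one_mul]
  have hψ0 : ψ 0 = 0 := by simpa using hψ 0
  set c := ι ((N : ℚ_[p]) ^ (-(r + 1)))
  set A : ℕ → K := fun j => ∑ b ∈ range N, (ζ ^ j) ^ b * ι (ψ (u * b))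
  refine ⟨fun j => -(c * A j), fun j hj => ?_, ?_⟩
  · have hj := mem_Icc.1 hj
    refine tendsto_polylogSeq ι hι hψcont hψ hN hu ?_ fun s => ?_
    · rw [← pow_mul, mul_comm, pow_mul, hζ.pow_eq_one, one_pow]
    · rw [← pow_mul, mul_comm, pow_mul]
      exact (hζ.pow_of_coprime _ (hcop.pow_left s)).pow_ne_one_of_pos_of_lt (by omega) (by omega)
  · have hcancel : ι ((N : ℚ_[p]) ^ r) * (c * N) = 1 := by
      have hNq : (N : ℚ_[p]) ≠ 0 := by exact_mod_cast hN.ne'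
      rw [← map_natCast ι N, ← map_mul, ← map_mul, ← zpow_add_one₀ hNq, ← zpow_add₀ hNq,
        show r + (-(r + 1) + 1) = 0 by ring, zpow_zero, map_one]
    rw [sum_Icc_one_sub_one_eq_sum_range (by simp)]
    simp only [mul_neg, mul_left_comm _ c, sum_neg_distrib, ← mul_sum, A,
      hζ.sum_one_sub_zpow_mul_sum_pow_mul hn, Nat.cast_zero, mul_zero, hψ0, ← hxu]
    rw [PadicInt.coe_zero, map_zero]
    linear_combination (-ι (ψ x)) * hcancel

theorem polygamma_via_polylog_at_roots_of_unity
    (p : ℕ) [Fact p.Prime] (N : ℕ) (hN : 2 ≤ N) (hpN : ¬ p ∣ N)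
    (n : ℕ) (hn : n < N) (r : ℤ)
    (K : Type*) [NontriviallyNormedField K] [CompleteSpace K] [IsUltrametricDist K]
    (ι : ℚ_[p] →+* K) (hι : ∀ x : ℚ_[p], ‖ι x‖ = ‖x‖)
    (ζ : K) (hζ : IsPrimitiveRoot ζ N)
    (ψ : ℤ_[p] → ℤ_[p]) (hψcont : Continuous ψ)
    (hψ : ∀ m : ℕ, ((ψ (m : ℤ_[p]) : ℤ_[p]) : ℚ_[p]) =
      ∑ k ∈ (Finset.Ico 1 m).filter (fun k => ¬ p ∣ k), ((k : ℚ_[p])) ^ (-(r + 1)))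
    (x : ℤ_[p]) (hx : (N : ℤ_[p]) * x = (n : ℤ_[p])) :
    ∃ L : ℕ → K,
      (∀ j ∈ Finset.Icc 1 (N - 1),
        Tendsto (polylogSeq p ι (r + 1) (ζ ^ j)) atTop (nhds (L j))) ∧
      ι ((ψ x : ℤ_[p]) : ℚ_[p]) = ι ((N : ℚ_[p]) ^ r) *
        ∑ j ∈ Finset.Icc 1 (N - 1), (1 - ζ ^ (-(j * n : ℤ))) * L j :=
  polygamma_via_polylog_at_roots_of_unity_general p N hpN n hn r K ι hι ζ hζ ψ hψcont hψ x hx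
end

section
/- (Distribution formula for the p-adic polylogarithm.) Let p be a prime, r ∈ ℤ, and N ≥ 1 an integer with p ∤ N. Let R be an integral domain which is a ℤ_p-algebra and which contains a primitive N-th root of unity ζ (i.e. ζ^N = 1 and ζ^d ≠ 1 for 0 < d < N). Then in the power series ring R[[x]] one has Σ_{j=0}^{N−1} ( Σ_{k ≥ 1, p ∤ k} ζ^{jk} x^k k^{−r} ) = N^{1−r} · Σ_{k ≥ 1, p ∤ k} x^{Nk} k^{−r}, where k^{−r} ∈ ℤ_p and N^{1−r} ∈ ℤ_p (valid since p ∤ k and p ∤ N) are viewed in R via the ℤ_p-algebra structure. -/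
/-!
Averaging over the `N`-th roots of unity kills every coefficient `x^k` with `N ∤ k` and multiplies
the others by `N`, so the left side is `N · Σ_{p ∤ Nm} (Nm)^{-r} x^{Nm}`. Since `p ∤ N`, the
condition `p ∤ Nm` is `p ∤ m`, and `N · (Nm)^{-r} = N^{1-r} m^{-r}` in `ℚ_p`.
-/

open Finset

theorem IsPrimitiveRoot.sum_pow_mul_eq_ite {R : Type*} [CommRing R] [IsDomain R] {ζ : R} {N : ℕ}
    (hζ : IsPrimitiveRoot ζ N) (k : ℕ) :
    ∑ j ∈ range N, ζ ^ (j * k) = if N ∣ k then (N : R) else 0 := by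
  simp_rw [mul_comm _ k, pow_mul]
  split_ifs with hk
  · simp [(hζ.pow_eq_one_iff_dvd k).mpr hk]
  · have hne : ζ ^ k - 1 ≠ 0 := sub_ne_zero.mpr fun h => hk ((hζ.pow_eq_one_iff_dvd k).mp h)
    have hpow : (ζ ^ k) ^ N = 1 := by rw [← pow_mul, mul_comm, pow_mul, hζ.pow_eq_one, one_pow]
    apply mul_left_cancel₀ hne
    rw [mul_geom_sum, hpow, sub_self, mul_zero]

theorem IsPrimitiveRoot.sum_mk_pow_mul {R : Type*} [CommRing R] [IsDomain R] {ζ : R} {N : ℕ}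
    (hζ : IsPrimitiveRoot ζ N) (f : ℕ → R) :
    ∑ j ∈ range N, PowerSeries.mk (fun k => ζ ^ (j * k) * f k)
      = PowerSeries.mk (fun k => if N ∣ k then N * f k else 0) := by
  ext k
  simp only [map_sum, PowerSeries.coeff_mk, ← sum_mul, hζ.sum_pow_mul_eq_ite, ite_mul, zero_mul]

theorem mul_mul_zpow_neg {K : Type*} [Field K] {a : K} (ha : a ≠ 0) (b : K) (r : ℤ) :
    a * (a * b) ^ (-r) = a ^ (1 - r) * b ^ (-r) := by
  rw [mul_zpow, zpow_sub₀ ha, zpow_one, zpow_neg, div_eq_mul_inv]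
  ring

theorem padic_polylog_distribution_power_series_general
    (p : ℕ) [Fact p.Prime] (r : ℤ) (N : ℕ) (hpN : ¬ p ∣ N)
    (R : Type*) [CommRing R] [IsDomain R] [Algebra ℤ_[p] R]
    (ζ : R) (hζ : IsPrimitiveRoot ζ N)
    (ν : ℕ → ℤ_[p])
    (hν : ∀ k : ℕ, ¬ p ∣ k → ((ν k : ℤ_[p]) : ℚ_[p]) = ((k : ℚ_[p])) ^ (-r))
    (μ : ℤ_[p]) (hμ : ((μ : ℤ_[p]) : ℚ_[p]) = ((N : ℚ_[p])) ^ (1 - r)) :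
    ∑ j ∈ Finset.range N,
      PowerSeries.mk (fun k =>
        if 1 ≤ k ∧ ¬ p ∣ k then ζ ^ (j * k) * algebraMap ℤ_[p] R (ν k) else 0)
    = PowerSeries.mk (fun i =>
        if N ∣ i ∧ 1 ≤ i ∧ ¬ p ∣ (i / N) then algebraMap ℤ_[p] R (μ * ν (i / N)) else 0) := by
  have hN : N ≠ 0 := by rintro rfl; exact hpN (dvd_zero p)
  have hcoprime : ∀ m, ¬ p ∣ N * m ↔ ¬ p ∣ m := by simp [(Fact.out : p.Prime).dvd_mul, hpN]
  have hscale : ∀ m, ¬ p ∣ m → (N : ℤ_[p]) * ν (N * m) = μ * ν m := fun m hm =>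
    Subtype.coe_injective <| by
      push_cast
      rw [hν _ ((hcoprime m).mpr hm), hν _ hm, hμ, Nat.cast_mul,
        mul_mul_zpow_neg (Nat.cast_ne_zero.mpr hN)]
  simp_rw [← mul_ite_zero, hζ.sum_mk_pow_mul]
  ext k
  simp only [PowerSeries.coeff_mk]
  by_cases hk : N ∣ k
  · obtain ⟨m, rfl⟩ := hk
    simp only [dvd_mul_right, true_and, Nat.mul_div_cancel_left m (Nat.pos_of_ne_zero hN),
      hcoprime, if_true, mul_ite_zero, ← map_natCast (algebraMap ℤ_[p] R), ← map_mul]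
    split_ifs with hm
    · rw [hscale m hm.2]
    · rfl
  · simp [hk]

theorem padic_polylog_distribution_power_series
    (p : ℕ) [Fact p.Prime] (r : ℤ) (N : ℕ) (hN : 1 ≤ N) (hpN : ¬ p ∣ N)
    (R : Type*) [CommRing R] [IsDomain R] [Algebra ℤ_[p] R]
    (ζ : R) (hζ : IsPrimitiveRoot ζ N)
    (ν : ℕ → ℤ_[p])
    (hν : ∀ k : ℕ, ¬ p ∣ k → ((ν k : ℤ_[p]) : ℚ_[p]) = ((k : ℚ_[p])) ^ (-r))
    (μ : ℤ_[p]) (hμ : ((μ : ℤ_[p]) : ℚ_[p]) = ((N : ℚ_[p])) ^ (1 - r)) :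
    ∑ j ∈ Finset.range N,
      PowerSeries.mk (fun k =>
        if 1 ≤ k ∧ ¬ p ∣ k then ζ ^ (j * k) * algebraMap ℤ_[p] R (ν k) else 0)
    = PowerSeries.mk (fun i =>
        if N ∣ i ∧ 1 ≤ i ∧ ¬ p ∣ (i / N) then algebraMap ℤ_[p] R (μ * ν (i / N)) else 0) :=
  padic_polylog_distribution_power_series_general p r N hpN R ζ hζ ν hν μ hμ
end

section
/- (Volkenborn-integral representation of the p-adic polygamma functions.) Let p be a prime and r a nonzero integer. Then: (i) the limit L := lim_{n→∞} p^{−n} · Σ_{0 ≤ k < p^n, p ∤ k} k^{−r} exists in ℚ_p; (ii) for every z ∈ ℤ_p the limit Q(z) := lim_{s→∞} p^{−s} · Σ_{0 ≤ j < p^s, z + j ∈ ℤ_p^×} (z + j)^{−r} exists in ℚ_p; and (iii) −(1/r) · Q(z) = ψ̃_p^{(r)}(z) − (1/r) · L for every z ∈ ℤ_p. (The constant −(1/r) L equals −L_p(1+r, ω^{−r}), so −(1/r)Q(z) is the r-th p-adic polygamma function ψ_p^{(r)}(z).) -/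
/-!
Let `f x = x ^ (-r)` on `ℤ_[p]ˣ`, extended by `0`, and `R s z = p ^ (-s) * ∑_{j < p ^ s} f (z + j)`.
Since `f (x + h) = f x - r h x ^ (-r - 1) + O(|h| ^ 2)` for `|h| < 1`, shifting the window by an
integer `m` telescopes to `R s m - R s 0 = -r ψ̃ m + O(p ^ (-s))`, while shifting it by `z - m` with
`|z - m| ≤ p ^ (-s)` costs only the oscillation of `ψ̃` on a ball of radius `p ^ (-s)`. Hence
`R s z - R s 0 → -r ψ̃ z` uniformly on `ℤ_[p]`. Cutting the window of length `p ^ (s + 1)` into `p`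
windows of length `p ^ s` writes `R (s + 1) 0 - R s 0` through these differences at the points
`p ^ s i → 0`, so `R s 0` is Cauchy; with `L` its limit, `Q z = L - r ψ̃ z`.
-/

open Finset Filter
open scoped Classical Topology

theorem UniformContinuous.eventually_norm_sub_lt {E F : Type*} [SeminormedAddCommGroup E]
    [SeminormedAddCommGroup F] {f : E → F} (hf : UniformContinuous f) {α : Type*} {l : Filter α}
    {δ : α → ℝ} (hδ : Tendsto δ l (𝓝 0)) {ε : ℝ} (hε : 0 < ε) :
    ∀ᶠ s in l, ∀ a b, ‖a - b‖ ≤ δ s → ‖f a - f b‖ < ε := by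
  obtain ⟨η, hη, hf⟩ := Metric.uniformContinuous_iff.mp hf ε hε
  filter_upwards [hδ.eventually (gt_mem_nhds hη)] with s hs a b hab
  simpa [dist_eq_norm] using hf (a := a) (b := b) (by simpa [dist_eq_norm] using hab.trans_lt hs)

namespace Volkenborn

section Taylor

variable {K : Type*} [NormedField K] [IsUltrametricDist K]

open IsUltrametricDist

theorem norm_one_add_pow_sub_le {t : K} (ht : ‖t‖ ≤ 1) (n : ℕ) :
    ‖(1 + t) ^ n - 1 - n * t‖ ≤ ‖t‖ ^ 2 := by
  induction n with
  | zero => simp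
  | succ n ih =>
    have h1t : ‖1 + t‖ ≤ 1 := (norm_add_le_max _ _).trans (by simp [ht])
    calc ‖(1 + t) ^ (n + 1) - 1 - ↑(n + 1) * t‖
        = ‖(1 + t) * ((1 + t) ^ n - 1 - n * t) + n * t ^ 2‖ := by push_cast; ring_nf
      _ ≤ max ‖(1 + t) * ((1 + t) ^ n - 1 - n * t)‖ ‖n * t ^ 2‖ := norm_add_le_max _ _
      _ ≤ ‖t‖ ^ 2 := by
        rw [norm_mul, norm_mul, norm_pow]
        exact max_le ((mul_le_mul h1t ih (norm_nonneg _) zero_le_one).trans_eq (one_mul _))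
          (mul_le_of_le_one_left (by positivity) (norm_natCast_le_one K n))

theorem norm_one_add_zpow_sub_le {t : K} (ht : ‖t‖ < 1) (k : ℤ) :
    ‖(1 + t) ^ k - 1 - k * t‖ ≤ ‖t‖ ^ 2 := by
  have h1t : ‖1 + t‖ = 1 := by
    rw [add_comm, norm_add_eq_max_of_norm_ne_norm (by simpa using ht.ne)]
    simpa using ht.le
  have hu : 1 + t ≠ 0 := norm_ne_zero_iff.mp (by simp [h1t])
  obtain ⟨n, rfl | rfl⟩ := Int.eq_nat_or_neg k
  · simpa using norm_one_add_pow_sub_le ht.le n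
  · obtain ⟨s, hs_def⟩ : ∃ s, s = -t * (1 + t)⁻¹ := ⟨_, rfl⟩
    have hinv : (1 + t)⁻¹ = 1 + s := by rw [hs_def]; field_simp; ring
    have hst : s + t = t ^ 2 * (1 + t)⁻¹ := by rw [hs_def]; field_simp; ring
    have hs : ‖s‖ = ‖t‖ := by simp [hs_def, h1t]
    calc ‖(1 + t) ^ (-(n : ℤ)) - 1 - ((-(n : ℤ) : ℤ) : K) * t‖
        = ‖((1 + s) ^ n - 1 - n * s) + n * (s + t)‖ := by
          rw [zpow_neg, zpow_natCast, ← inv_pow, hinv]; push_cast; ring_nf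
      _ ≤ ‖t‖ ^ 2 := by
        refine (norm_add_le_max _ _).trans (max_le ?_ ?_)
        · exact (norm_one_add_pow_sub_le (hs.trans_le ht.le) n).trans_eq (by rw [hs])
        · simpa [hst, h1t] using mul_le_of_le_one_left (by positivity) (norm_natCast_le_one K n)

theorem norm_add_zpow_sub_le {a c : K} (ha : ‖a‖ = 1) (hc : ‖c‖ < 1) (k : ℤ) :
    ‖(a + c) ^ k - a ^ k - k * c * a ^ (k - 1)‖ ≤ ‖c‖ ^ 2 := by
  have ha0 : a ≠ 0 := norm_ne_zero_iff.mp (by simp [ha])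
  have key := norm_one_add_zpow_sub_le (t := c / a) (by simpa [ha] using hc) k
  calc ‖(a + c) ^ k - a ^ k - k * c * a ^ (k - 1)‖
      = ‖a ^ k * ((1 + c / a) ^ k - 1 - k * (c / a))‖ := by
        rw [show a + c = a * (1 + c / a) by field_simp, mul_zpow, zpow_sub_one₀ ha0]; ring_nf
    _ ≤ ‖c‖ ^ 2 := by simpa [ha] using key

end Taylor

theorem sum_range_mul_eq_sum_sum {M : Type*} [AddCommMonoid M] (f : ℕ → M) (m n : ℕ) :
    ∑ j ∈ range (m * n), f j = ∑ i ∈ range n, ∑ j ∈ range m, f (m * i + j) := by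
  induction n with
  | zero => simp
  | succ n ih => rw [Nat.mul_succ, sum_range_add, ih, sum_range_succ]

theorem sum_range_add_sub_sum_range {M : Type*} [AddCommGroup M] (f : ℕ → M) (m n : ℕ) :
    ∑ j ∈ range n, f (m + j) - ∑ j ∈ range n, f j =
      ∑ j ∈ range m, f (j + n) - ∑ j ∈ range m, f j := by
  have h1 := sum_range_add f m n
  have h2 := sum_range_add f n m
  rw [add_comm n m] at h2
  simp only [add_comm n] at h2
  rw [sub_eq_sub_iff_add_eq_add, add_comm, ← h1, h2, add_comm]

theorem Ico_one_filter_not_dvd (p m : ℕ) :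
    {j ∈ Ico 1 m | ¬ p ∣ j} = {j ∈ range m | ¬ p ∣ j} := by
  ext j
  simp only [mem_filter, mem_Ico, mem_range]
  exact ⟨fun ⟨⟨_, hm⟩, hp⟩ => ⟨hm, hp⟩,
    fun ⟨hm, hp⟩ => ⟨⟨Nat.pos_of_ne_zero (by rintro rfl; exact hp (dvd_zero p)), hm⟩, hp⟩⟩

variable {p : ℕ} [Fact p.Prime]

theorem natCast_p_ne_zero : (p : ℚ_[p]) ≠ 0 :=
  Nat.cast_ne_zero.mpr (Fact.out : p.Prime).ne_zero

noncomputable def unitZPow (k : ℤ) (x : ℤ_[p]) : ℚ_[p] :=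
  if ‖x‖ = 1 then (x : ℚ_[p]) ^ k else 0

theorem sum_range_unitZPow (k : ℤ) (n : ℕ) :
    ∑ j ∈ range n, unitZPow k (j : ℤ_[p]) = ∑ j ∈ range n with ¬ p ∣ j, (j : ℚ_[p]) ^ k := by
  rw [sum_filter]
  refine sum_congr rfl fun j _ => ?_
  simp [unitZPow, (Fact.out : p.Prime).coprime_iff_not_dvd]

theorem norm_add_eq_one_iff {x h : ℤ_[p]} (hh : ‖h‖ < 1) : ‖x + h‖ = 1 ↔ ‖x‖ = 1 := by
  rcases (PadicInt.norm_le_one x).eq_or_lt with hx | hx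
  · simp [hx, IsUltrametricDist.norm_add_eq_max_of_norm_ne_norm (hx ▸ hh).ne', hh.le]
  · exact iff_of_false
      ((IsUltrametricDist.norm_add_le_max x h).trans_lt (max_lt hx hh)).ne hx.ne

theorem norm_unitZPow_add_sub_le (k : ℤ) (x : ℤ_[p]) {h : ℤ_[p]} (hh : ‖h‖ < 1) :
    ‖unitZPow k (x + h) - unitZPow k x - k * h * unitZPow (k - 1) x‖ ≤ ‖h‖ ^ 2 := by
  by_cases hx : ‖x‖ = 1
  · have key := norm_add_zpow_sub_le (K := ℚ_[p]) hx hh k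
    rw [← PadicInt.norm_def] at key
    simpa [unitZPow, hx, norm_add_eq_one_iff hh] using key
  · simp [unitZPow, hx, norm_add_eq_one_iff hh]

theorem norm_sum_unitZPow_add_sub_le {ι : Type*} (k : ℤ) (s : Finset ι) (x : ι → ℤ_[p])
    {h : ℤ_[p]} (hh : ‖h‖ < 1) :
    ‖∑ i ∈ s, unitZPow k (x i + h) - ∑ i ∈ s, unitZPow k (x i) -
      k * h * ∑ i ∈ s, unitZPow (k - 1) (x i)‖ ≤ ‖h‖ ^ 2 := by
  rw [mul_sum, ← sum_sub_distrib, ← sum_sub_distrib]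
  exact IsUltrametricDist.norm_sum_le_of_forall_le_of_nonneg (by positivity)
    fun i _ => norm_unitZPow_add_sub_le k (x i) hh

noncomputable def riemannSum (f : ℤ_[p] → ℚ_[p]) (s : ℕ) (z : ℤ_[p]) : ℚ_[p] :=
  (p : ℚ_[p]) ^ (-(s : ℤ)) * ∑ j ∈ range (p ^ s), f (z + j)

theorem norm_p_zpow_neg_mul_le {s : ℕ} {x : ℚ_[p]} {B : ℝ} (hx : ‖x‖ ≤ ‖(p : ℤ_[p]) ^ s‖ * B) :
    ‖(p : ℚ_[p]) ^ (-(s : ℤ)) * x‖ ≤ B := by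
  have hps : ‖(p : ℤ_[p]) ^ s‖ = ‖(p : ℚ_[p]) ^ s‖ := by simp [PadicInt.norm_def]
  rw [norm_mul, zpow_neg, zpow_natCast, norm_inv, ← hps, inv_mul_le_iff₀ (by simp [(Fact.out : p.Prime).pos])]
  exact hx

theorem norm_p_pow_lt_one {s : ℕ} (hs : 0 < s) : ‖(p : ℤ_[p]) ^ s‖ < 1 := by
  simpa using PadicInt.norm_natCast_lt_one_iff.mpr (dvd_pow_self p hs.ne')

theorem riemannSum_sub_riemannSum (f : ℤ_[p] → ℚ_[p]) (s : ℕ) (z w : ℤ_[p]) :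
    riemannSum f s z - riemannSum f s w =
      (p : ℚ_[p]) ^ (-(s : ℤ)) *
        (∑ j ∈ range (p ^ s), f (z + (j : ℤ_[p])) - ∑ j ∈ range (p ^ s), f (w + (j : ℤ_[p]))) :=
  (mul_sub _ _ _).symm

theorem norm_riemannSum_sub_le (k : ℤ) {s : ℕ} (hs : 0 < s) {z w : ℤ_[p]}
    (hzw : ‖z - w‖ ≤ ‖(p : ℤ_[p]) ^ s‖) :
    ‖riemannSum (unitZPow k) s z - riemannSum (unitZPow k) s w‖ ≤
      max ‖(p : ℤ_[p]) ^ s‖ ‖∑ j ∈ range (p ^ s), unitZPow (k - 1) (w + (j : ℤ_[p]))‖ := by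
  have hh := hzw.trans_lt (norm_p_pow_lt_one hs)
  have key := norm_sum_unitZPow_add_sub_le k (range (p ^ s)) (fun j : ℕ => w + (j : ℤ_[p])) hh
  simp only [add_right_comm w, add_sub_cancel] at key
  rw [riemannSum_sub_riemannSum]
  refine norm_p_zpow_neg_mul_le ?_
  set S := ∑ j ∈ range (p ^ s), unitZPow (k - 1) (w + (j : ℤ_[p]))
  set D := ∑ j ∈ range (p ^ s), unitZPow k (z + (j : ℤ_[p])) -
    ∑ j ∈ range (p ^ s), unitZPow k (w + (j : ℤ_[p]))
  have hlin : ‖(k : ℚ_[p]) * (z - w : ℤ_[p]) * S‖ ≤ ‖(p : ℤ_[p]) ^ s‖ * ‖S‖ := by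
    rw [norm_mul, norm_mul, ← PadicInt.norm_def]
    gcongr
    exact mul_le_of_le_one_left (norm_nonneg _) (Padic.norm_int_le_one k) |>.trans hzw
  calc ‖D‖ = ‖(D - k * (z - w : ℤ_[p]) * S) + k * (z - w : ℤ_[p]) * S‖ := by rw [sub_add_cancel]
    _ ≤ max (‖(p : ℤ_[p]) ^ s‖ * ‖(p : ℤ_[p]) ^ s‖) (‖(p : ℤ_[p]) ^ s‖ * ‖S‖) :=
      (IsUltrametricDist.norm_add_le_max _ _).trans <| max_le_max
        (key.trans (by rw [sq]; gcongr)) hlin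
    _ = ‖(p : ℤ_[p]) ^ s‖ * max ‖(p : ℤ_[p]) ^ s‖ ‖S‖ :=
      (mul_max_of_nonneg _ _ (norm_nonneg _)).symm

theorem norm_riemannSum_natCast_sub_le (k : ℤ) {s : ℕ} (hs : 0 < s) (m : ℕ) :
    ‖riemannSum (unitZPow k) s m - riemannSum (unitZPow k) s 0 -
      (k : ℚ_[p]) * ∑ j ∈ range m, unitZPow (k - 1) (j : ℤ_[p])‖ ≤ ‖(p : ℤ_[p]) ^ s‖ := by
  have key := norm_sum_unitZPow_add_sub_le k (range m) (fun j : ℕ => (j : ℤ_[p]))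
    (norm_p_pow_lt_one hs)
  have htel := sum_range_add_sub_sum_range (fun j : ℕ => unitZPow k (j : ℤ_[p])) m (p ^ s)
  push_cast at htel
  have hp : (p : ℚ_[p]) ^ (-(s : ℤ)) * (p : ℚ_[p]) ^ s = 1 := by
    rw [zpow_neg, zpow_natCast, inv_mul_cancel₀ (pow_ne_zero _ natCast_p_ne_zero)]
  rw [riemannSum_sub_riemannSum]
  simp only [zero_add]
  rw [htel]
  push_cast at key
  have hsplit (x y : ℚ_[p]) :
      (p : ℚ_[p]) ^ (-(s : ℤ)) * x - y = (p : ℚ_[p]) ^ (-(s : ℤ)) * (x - (p : ℚ_[p]) ^ s * y) := by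
    linear_combination y * hp
  rw [hsplit]
  exact norm_p_zpow_neg_mul_le ((le_of_eq (by congr 1; ring)).trans (key.trans_eq (sq _)))

theorem norm_appr_sub_le (z : ℤ_[p]) (s : ℕ) : ‖z - z.appr s‖ ≤ ‖(p : ℤ_[p]) ^ s‖ := by
  obtain ⟨c, hc⟩ := Ideal.mem_span_singleton'.mp (z.appr_spec s)
  rw [← hc, norm_mul]
  exact mul_le_of_le_one_left (norm_nonneg _) (PadicInt.norm_le_one c)

theorem tendsto_p_pow : Tendsto (fun s : ℕ => (p : ℤ_[p]) ^ s) atTop (𝓝 0) :=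
  tendsto_pow_atTop_nhds_zero_of_norm_lt_one
    (PadicInt.norm_p (p := p) ▸
      inv_lt_one_of_one_lt₀ (by exact_mod_cast (Fact.out : p.Prime).one_lt))

theorem tendsto_norm_p_pow : Tendsto (fun s : ℕ => ‖(p : ℤ_[p]) ^ s‖) atTop (𝓝 0) := by
  simpa using (tendsto_p_pow (p := p)).norm

theorem tendstoUniformly_riemannSum_sub (k : ℤ) {Ψ : ℤ_[p] → ℚ_[p]} (hΨ : UniformContinuous Ψ)
    (hΨnat : ∀ m : ℕ, Ψ m = ∑ j ∈ range m, unitZPow (k - 1) (j : ℤ_[p])) :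
    TendstoUniformly (fun s z => riemannSum (unitZPow k) s z - riemannSum (unitZPow k) s 0)
      (fun z => k * Ψ z) atTop := by
  rw [Metric.tendstoUniformly_iff]
  intro ε hε
  have hδ := tendsto_norm_p_pow (p := p)
  filter_upwards [hΨ.eventually_norm_sub_lt hδ hε, hδ.eventually (gt_mem_nhds hε),
    eventually_gt_atTop 0] with s hΨs hps hs z
  set m : ℕ := z.appr s
  have hzm := norm_appr_sub_le z s
  have hshift : ∑ j ∈ range (p ^ s), unitZPow (k - 1) ((m : ℤ_[p]) + (j : ℤ_[p])) =
      Ψ ((m + p ^ s : ℕ) : ℤ_[p]) - Ψ m := by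
    rw [hΨnat, hΨnat, sum_range_add, add_sub_cancel_left]
    push_cast; rfl
  have hnear := norm_riemannSum_sub_le k hs hzm
  rw [hshift] at hnear
  have hnat := norm_riemannSum_natCast_sub_le (p := p) k hs m
  rw [← hΨnat] at hnat
  have hΨm : ‖Ψ ((m + p ^ s : ℕ) : ℤ_[p]) - Ψ m‖ < ε := hΨs _ _ (by push_cast; simp)
  have hΨz : ‖(k : ℚ_[p]) * (Ψ m - Ψ z)‖ < ε := by
    rw [norm_mul]
    exact (mul_le_of_le_one_left (norm_nonneg _) (Padic.norm_int_le_one k)).trans_lt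
      (hΨs _ _ (norm_sub_rev (m : ℤ_[p]) z ▸ hzm))
  rw [dist_eq_norm']
  calc ‖riemannSum (unitZPow k) s z - riemannSum (unitZPow k) s 0 - (k : ℚ_[p]) * Ψ z‖
      = ‖(riemannSum (unitZPow k) s z - riemannSum (unitZPow k) s m) +
          (riemannSum (unitZPow k) s m - riemannSum (unitZPow k) s 0 - (k : ℚ_[p]) * Ψ m) +
          (k : ℚ_[p]) * (Ψ m - Ψ z)‖ := by ring_nf
    _ < ε := by
      refine (IsUltrametricDist.norm_add_le_max _ _).trans_lt (max_lt ?_ hΨz)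
      exact (IsUltrametricDist.norm_add_le_max _ _).trans_lt
        (max_lt (hnear.trans_lt (max_lt hps hΨm)) (hnat.trans_lt hps))

theorem riemannSum_succ_zero (f : ℤ_[p] → ℚ_[p]) (s : ℕ) :
    riemannSum f (s + 1) 0 =
      (p : ℚ_[p])⁻¹ * ∑ i ∈ range p, riemannSum f s ((p : ℤ_[p]) ^ s * i) := by
  simp only [riemannSum, pow_succ, sum_range_mul_eq_sum_sum, mul_sum, zero_add]
  push_cast
  refine sum_congr rfl fun i _ => sum_congr rfl fun j _ => ?_
  rw [← mul_assoc, ← zpow_neg_one, ← zpow_add₀ natCast_p_ne_zero, neg_add, add_comm]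

theorem cauchySeq_riemannSum_zero (f : ℤ_[p] → ℚ_[p]) {φ : ℤ_[p] → ℚ_[p]}
    (hunif : TendstoUniformly (fun s z => riemannSum f s z - riemannSum f s 0) φ atTop)
    (hφ : ContinuousAt φ 0) (hφ0 : φ 0 = 0) :
    CauchySeq fun s => riemannSum f s 0 := by
  refine NonarchimedeanAddGroup.cauchySeq_of_tendsto_sub_nhds_zero ?_
  have hp : (p : ℚ_[p])⁻¹ * p = 1 := inv_mul_cancel₀ natCast_p_ne_zero
  have hblock (s : ℕ) : riemannSum f (s + 1) 0 - riemannSum f s 0 =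
      (p : ℚ_[p])⁻¹ * ∑ i ∈ range p, (riemannSum f s ((p : ℤ_[p]) ^ s * i) - riemannSum f s 0) := by
    rw [riemannSum_succ_zero, sum_sub_distrib, sum_const, card_range, nsmul_eq_mul]
    linear_combination riemannSum f s 0 * hp
  have hpoint (i : ℕ) : Tendsto (fun s => riemannSum f s ((p : ℤ_[p]) ^ s * i) - riemannSum f s 0)
      atTop (𝓝 0) := by
    have hzero : Tendsto (fun s : ℕ => (p : ℤ_[p]) ^ s * i) atTop (𝓝 0) := by
      simpa using (tendsto_p_pow (p := p)).mul_const (i : ℤ_[p])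
    simpa [hφ0] using hunif.tendsto_comp hφ hzero
  simpa [hblock] using (tendsto_finsetSum (range p) fun i _ => hpoint i).const_mul (p : ℚ_[p])⁻¹

end Volkenborn

open Volkenborn in
theorem volkenborn_polygamma
    (p : ℕ) [Fact p.Prime] (r : ℤ) (hr : r ≠ 0)
    (ψ : ℤ_[p] → ℤ_[p]) (hψcont : Continuous ψ)
    (hψ : ∀ m : ℕ, ((ψ (m : ℤ_[p]) : ℤ_[p]) : ℚ_[p]) =
      ∑ k ∈ (Finset.Ico 1 m).filter (fun k => ¬ p ∣ k), ((k : ℚ_[p])) ^ (-(r + 1))) :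
    ∃ L : ℚ_[p],
      Tendsto (fun n : ℕ => (p : ℚ_[p]) ^ (-(n : ℤ)) *
          ∑ k ∈ (Finset.range (p ^ n)).filter (fun k => ¬ p ∣ k), ((k : ℚ_[p])) ^ (-r))
        atTop (nhds L) ∧
      ∀ z : ℤ_[p], ∃ Q : ℚ_[p],
        Tendsto (fun s : ℕ => (p : ℚ_[p]) ^ (-(s : ℤ)) *
            ∑ j ∈ Finset.range (p ^ s),
              if ‖z + (j : ℤ_[p])‖ = 1 then
                (((z + (j : ℤ_[p]) : ℤ_[p]) : ℚ_[p])) ^ (-r)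
              else 0)
          atTop (nhds Q) ∧
        -((r : ℚ_[p]))⁻¹ * Q = ((ψ z : ℤ_[p]) : ℚ_[p]) - ((r : ℚ_[p]))⁻¹ * L := by
  have hψnat (m : ℕ) :
      ((ψ m : ℤ_[p]) : ℚ_[p]) = ∑ j ∈ range m, unitZPow (-r - 1) (j : ℤ_[p]) := by
    rw [hψ, sum_range_unitZPow, Ico_one_filter_not_dvd, neg_add']
  have hunif := tendstoUniformly_riemannSum_sub (-r) (Ψ := fun x => ((ψ x : ℤ_[p]) : ℚ_[p]))
    (uniformContinuous_subtype_val.comp (CompactSpace.uniformContinuous_of_continuous hψcont))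
    hψnat
  have hψ0 : ((ψ 0 : ℤ_[p]) : ℚ_[p]) = 0 := by simpa using hψnat 0
  obtain ⟨L, hL⟩ := cauchySeq_tendsto_of_complete <| cauchySeq_riemannSum_zero _ hunif
    (by fun_prop) (by simp [hψ0])
  refine ⟨L, by simpa [riemannSum, sum_range_unitZPow] using hL,
    fun z => ⟨-r * ψ z + L, ((hunif.tendsto_at z).add hL).congr fun s => sub_add_cancel _ _, ?_⟩⟩
  field_simp
  ring
end

section
/- Let p be a prime, a, b ∈ ℤ_p, and let a₀, b₀ ∈ {0, 1, …, p−1} be the unique integers with a ≡ −a₀ mod p and b ≡ −b₀ mod p. Then the truncated hypergeometric sum satisfies Σ_{n=0}^{p−1} ((a)_n/n!) · ((b)_n/n!) ≡ (a₀+b₀)! / (a₀! · b₀!) mod p ℤ_p (note each (a)_n/n! lies in ℤ_p). In particular, this truncated sum is a p-adic unit if and only if a₀ + b₀ ≤ p − 1. -/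
open Finset

/-!
Since `a ≡ -a₀` and `b ≡ -b₀` modulo `p`, reducing modulo `p` turns `(a)_n (b)_n` into
`(-a₀)_n (-b₀)_n = (n! C(a₀, n)) (n! C(b₀, n))`. For `n < p` the factorial `n!` is a `p`-adic unit,
so each term of the truncated sum is congruent to `C(a₀, n) C(b₀, n)`, and by Vandermonde's identity
these add up to `C(a₀ + b₀, a₀)`. Finally `p` divides `C(a₀ + b₀, a₀)` exactly when `a₀ + b₀ ≥ p`.
-/

theorem map_ascPochhammer_eval_of_map_eq_neg_natCast {R S : Type*} [CommRing R] [CommRing S]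
    (f : R →+* S) {a : R} {k : ℕ} (h : f a = -k) (n : ℕ) :
    f ((ascPochhammer R n).eval a) = (-1) ^ n * ((n.factorial * k.choose n : ℕ) : S) := by
  rw [← Polynomial.eval_map_apply, ascPochhammer_map, h,
    ascPochhammer_eval_neg_eq_descPochhammer, descPochhammer_eval_eq_descFactorial,
    Nat.descFactorial_eq_factorial_mul_choose]

theorem Nat.sum_range_choose_mul_choose {a b N : ℕ} (h : a < N) :
    ∑ n ∈ range N, a.choose n * b.choose n = (a + b).choose a := by
  have hsupp : ∑ n ∈ range (a + 1), a.choose n * b.choose n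
      = ∑ n ∈ range N, a.choose n * b.choose n := by
    refine sum_subset (range_subset_range.2 h) fun n _ hn ↦ ?_
    rw [Nat.choose_eq_zero_of_lt (by simpa using hn), zero_mul]
  rw [← hsupp, Nat.add_choose_eq, Nat.sum_antidiagonal_eq_sum_range_succ_mk,
    ← sum_range_reflect]
  refine sum_congr rfl fun n hn ↦ ?_
  rw [Nat.add_sub_cancel, Nat.choose_symm (by simpa [Nat.lt_succ_iff] using hn)]

theorem Nat.Prime.coprime_add_choose_iff {p a b : ℕ} (hp : p.Prime) (ha : a < p) (hb : b < p) :
    p.Coprime ((a + b).choose a) ↔ a + b < p := by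
  refine ⟨fun hcop ↦ ?_, fun hab ↦ hp.coprime_choose_of_lt hab (Nat.le_add_right a b)⟩
  by_contra! hle
  exact hp.coprime_iff_not_dvd.1 hcop (hp.dvd_choose_add ha hb hle)

theorem IsUltrametricDist.norm_eq_iff_of_norm_sub_lt {E : Type*} [SeminormedAddCommGroup E]
    [IsUltrametricDist E] {x y : E} {r : ℝ} (h : ‖x - y‖ < r) : ‖x‖ = r ↔ ‖y‖ = r := by
  have key : ∀ x y : E, ‖x - y‖ < r → ‖y‖ = r → ‖x‖ = r := fun x y h hy ↦ by
    have hmax := norm_add_eq_max_of_norm_ne_norm (h.trans_eq hy.symm).ne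
    rw [sub_add_cancel, max_eq_right (h.trans_eq hy.symm).le] at hmax
    exact hmax.trans hy
  exact ⟨key y x (by rwa [norm_sub_rev]), key x y h⟩

namespace PadicInt

variable {p : ℕ} [Fact p.Prime]

theorem toZMod_eq_neg_of_add_eq_p_mul {a : ℤ_[p]} {k : ℕ} (h : ∃ u : ℤ_[p], a + k = p * u) :
    toZMod a = -k := by
  obtain ⟨u, hu⟩ := h
  have hmod := congrArg toZMod hu
  rw [map_add, map_mul, map_natCast, map_natCast, ZMod.natCast_self, zero_mul] at hmod
  exact eq_neg_of_add_eq_zero_left hmod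

theorem norm_le_inv_of_toZMod_eq_zero {x : ℤ_[p]} (h : toZMod x = 0) : ‖x‖ ≤ (p : ℝ)⁻¹ := by
  have hx : x ∈ Ideal.span {(p : ℤ_[p]) ^ 1} := by
    rwa [pow_one, ← maximalIdeal_eq_span_p, ← ker_toZMod, RingHom.mem_ker]
  simpa using (norm_le_pow_iff_mem_span_pow x 1).2 hx

theorem norm_hypergeometricTerm_sub_choose_mul_choose_le {a b : ℤ_[p]} {a₀ b₀ n : ℕ}
    (ha : toZMod a = -a₀) (hb : toZMod b = -b₀) (hn : n < p) :
    ‖((((ascPochhammer ℤ_[p] n).eval a : ℤ_[p]) : ℚ_[p]) / (n.factorial : ℚ_[p])) *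
        ((((ascPochhammer ℤ_[p] n).eval b : ℤ_[p]) : ℚ_[p]) / (n.factorial : ℚ_[p]))
      - ((a₀.choose n * b₀.choose n : ℕ) : ℚ_[p])‖ ≤ (p : ℝ)⁻¹ := by
  set x : ℤ_[p] := (ascPochhammer ℤ_[p] n).eval a * (ascPochhammer ℤ_[p] n).eval b
    - ((n.factorial * a₀.choose n * (n.factorial * b₀.choose n) : ℕ) : ℤ_[p])
  have hx : toZMod x = 0 := by
    rw [map_sub, map_mul, map_ascPochhammer_eval_of_map_eq_neg_natCast _ ha,
      map_ascPochhammer_eval_of_map_eq_neg_natCast _ hb, map_natCast, sub_eq_zero,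
      mul_mul_mul_comm, ← mul_pow, neg_one_mul, neg_neg, one_pow, one_mul]
    push_cast
    ring
  have hfact : ‖(n.factorial : ℚ_[p])‖ = 1 := by
    rw [Padic.norm_natCast_eq_one_iff, Nat.Prime.coprime_iff_not_dvd Fact.out,
      Nat.Prime.dvd_factorial Fact.out]
    exact hn.not_ge
  have hfact0 : (n.factorial : ℚ_[p]) ≠ 0 := by exact_mod_cast n.factorial_ne_zero
  have hterm : ((((ascPochhammer ℤ_[p] n).eval a : ℤ_[p]) : ℚ_[p]) / (n.factorial : ℚ_[p])) *
        ((((ascPochhammer ℤ_[p] n).eval b : ℤ_[p]) : ℚ_[p]) / (n.factorial : ℚ_[p]))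
      - ((a₀.choose n * b₀.choose n : ℕ) : ℚ_[p])
      = (x : ℚ_[p]) / (n.factorial * n.factorial) := by
    simp only [x]
    push_cast
    field_simp
  rw [hterm, norm_div, norm_mul, hfact, mul_one, div_one, padic_norm_e_of_padicInt]
  exact norm_le_inv_of_toZMod_eq_zero hx

end PadicInt

theorem truncated_hypergeometric_value_at_one_mod_p
    (p : ℕ) [Fact p.Prime] (a b : ℤ_[p]) (a₀ b₀ : ℕ)
    (ha₀ : a₀ < p) (hb₀ : b₀ < p)
    (ha : ∃ u : ℤ_[p], a + (a₀ : ℤ_[p]) = p * u)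
    (hb : ∃ u : ℤ_[p], b + (b₀ : ℤ_[p]) = p * u) :
    ‖(∑ n ∈ Finset.range p,
        ((((ascPochhammer ℤ_[p] n).eval a : ℤ_[p]) : ℚ_[p]) / (n.factorial : ℚ_[p])) *
          ((((ascPochhammer ℤ_[p] n).eval b : ℤ_[p]) : ℚ_[p]) / (n.factorial : ℚ_[p])))
        - (((a₀ + b₀).choose a₀ : ℕ) : ℚ_[p])‖ ≤ ((p : ℝ))⁻¹ ∧
    (‖∑ n ∈ Finset.range p,
        ((((ascPochhammer ℤ_[p] n).eval a : ℤ_[p]) : ℚ_[p]) / (n.factorial : ℚ_[p])) *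
          ((((ascPochhammer ℤ_[p] n).eval b : ℤ_[p]) : ℚ_[p]) / (n.factorial : ℚ_[p]))‖ = 1
      ↔ a₀ + b₀ ≤ p - 1) := by
  have hp : p.Prime := Fact.out
  have hsum : ‖(∑ n ∈ Finset.range p,
        ((((ascPochhammer ℤ_[p] n).eval a : ℤ_[p]) : ℚ_[p]) / (n.factorial : ℚ_[p])) *
          ((((ascPochhammer ℤ_[p] n).eval b : ℤ_[p]) : ℚ_[p]) / (n.factorial : ℚ_[p])))
        - (((a₀ + b₀).choose a₀ : ℕ) : ℚ_[p])‖ ≤ ((p : ℝ))⁻¹ := by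
    rw [← Nat.sum_range_choose_mul_choose ha₀, Nat.cast_sum, ← sum_sub_distrib]
    exact IsUltrametricDist.norm_sum_le_of_forall_le_of_nonneg (by positivity) fun n hn ↦
      PadicInt.norm_hypergeometricTerm_sub_choose_mul_choose_le
        (PadicInt.toZMod_eq_neg_of_add_eq_p_mul ha) (PadicInt.toZMod_eq_neg_of_add_eq_p_mul hb)
        (mem_range.1 hn)
  have hinv : ((p : ℝ))⁻¹ < 1 := inv_lt_one_of_one_lt₀ (mod_cast hp.one_lt)
  refine ⟨hsum, ?_⟩
  rw [IsUltrametricDist.norm_eq_iff_of_norm_sub_lt (hsum.trans_lt hinv),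
    Padic.norm_natCast_eq_one_iff, hp.coprime_add_choose_iff ha₀ hb₀]
  omega
end
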